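/- Let F : U → ℍ² be a harmonic map from U = {|z| > 1} with Hopf differential φ dz² where φ = σ(F)² F_z conj(F)_z, and let ω be defined by e^{2ω} = |F_z|/|F_{z̄}| (where the poles of ω are the zeros of φ). If F_z and F_{z̄} have equal modulus along a smooth curve c(t) satisfying Re W(c(t)) ≡ const with W' = √φ, then F ∘ c is constant. -/

import Mathlib

/-!
Write `d(F ∘ c)/dt = F_z c' + F_z̄ c̄'` and set `p = F_z c'`, `q = F_z̄ c̄'`.  Then
`σ(F)² p q̄ = (√φ c')²`, and `Re (√φ c') = 0` makes this a nonpositive real number, so `p q̄ ≤ 0`.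
Together with `|p| = |q|` this forces `q = -p`, hence `d(F ∘ c)/dt = 0`.
-/

/-- Wirtinger derivative `F_z` of a map `F : ℂ → ℂ` (real-differentiable). -/
noncomputable def wirtingerZ (F : ℂ → ℂ) (z : ℂ) : ℂ :=
  (fderiv ℝ F z 1 - Complex.I * fderiv ℝ F z Complex.I) / 2

/-- Wirtinger derivative `F_z̄` of a map `F : ℂ → ℂ`. -/
noncomputable def wirtingerZbar (F : ℂ → ℂ) (z : ℂ) : ℂ :=
  (fderiv ℝ F z 1 + Complex.I * fderiv ℝ F z Complex.I) / 2

/-- Conformal factor of the hyperbolic metric on the unit disk. -/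
noncomputable def hypFactor (z : ℂ) : ℝ := 2 / (1 - ‖z‖ ^ 2)

/-- The Hopf differential coefficient `φ = σ(F)² F_z conj(F)_z` of `F`. -/
noncomputable def hopfCoeff (F : ℂ → ℂ) (z : ℂ) : ℂ :=
  ((hypFactor (F z) : ℝ) : ℂ) ^ 2 * wirtingerZ F z * (starRingEnd ℂ) (wirtingerZbar F z)

open ComplexConjugate ComplexOrder

namespace Complex

theorem add_eq_zero_of_norm_eq_of_mul_conj_nonpos {p q : ℂ} (hnorm : ‖p‖ = ‖q‖)
    (hpq : p * conj q ≤ 0) : p + q = 0 := by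
  have hre : (p * conj q).re = -(‖q‖ ^ 2) := by
    rw [re_eq_neg_norm.mpr hpq, norm_mul, norm_conj, hnorm, sq]
  rw [← normSq_eq_zero, normSq_add, hre, normSq_eq_norm_sq, normSq_eq_norm_sq, hnorm]
  ring

theorem nonpos_of_ofReal_mul_nonpos {r : ℝ} {z : ℂ} (hr : 0 < r) (h : (r : ℂ) * z ≤ 0) :
    z ≤ 0 := by
  rw [nonpos_iff, re_ofReal_mul, im_ofReal_mul] at h
  rw [nonpos_iff]
  exact ⟨nonpos_of_mul_nonpos_right h.1 hr, (mul_eq_zero.mp h.2).resolve_left hr.ne'⟩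

end Complex

open Complex

theorem ContinuousLinearMap.apply_eq_wirtinger (L : ℂ →L[ℝ] ℂ) (v : ℂ) :
    L v = (L 1 - I * L I) / 2 * v + (L 1 + I * L I) / 2 * conj v := by
  have hv : v = v.re • (1 : ℂ) + v.im • I := by simp [real_smul]
  have hL : L v = v.re * L 1 + v.im * L I := by
    conv_lhs => rw [hv, map_add, map_smul, map_smul, real_smul, real_smul]
  rw [hL]
  conv_rhs => rw [← re_add_im v, map_add, map_mul, conj_ofReal, conj_ofReal, conj_I]
  linear_combination (v.im * L I) * I_sq

theorem fderiv_apply_eq_wirtinger (F : ℂ → ℂ) (z v : ℂ) :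
    fderiv ℝ F z v = wirtingerZ F z * v + wirtingerZbar F z * conj v :=
  (fderiv ℝ F z).apply_eq_wirtinger v

theorem hypFactor_pos {z : ℂ} (hz : ‖z‖ < 1) : 0 < hypFactor z := by
  have hz2 : ‖z‖ ^ 2 < 1 := pow_lt_one₀ (norm_nonneg z) hz two_ne_zero
  exact div_pos two_pos (sub_pos.mpr hz2)

theorem wirtingerZ_mul_conj_wirtingerZbar_nonpos {F : ℂ → ℂ} {z u w : ℂ} (hFz : ‖F z‖ < 1)
    (hw : w ^ 2 = hopfCoeff F z) (hre : (w * u).re = 0) :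
    wirtingerZ F z * u * conj (wirtingerZbar F z * conj u) ≤ 0 := by
  have hscale : ((hypFactor (F z) ^ 2 : ℝ) : ℂ) *
      (wirtingerZ F z * u * conj (wirtingerZbar F z * conj u)) = (w * u) ^ 2 := by
    rw [mul_pow, hw, hopfCoeff, map_mul, conj_conj]
    push_cast
    ring
  refine nonpos_of_ofReal_mul_nonpos (pow_pos (hypFactor_pos hFz) 2) ?_
  exact hscale ▸ sq_nonpos_iff.mpr hre

theorem fderiv_apply_eq_zero_of_norm_wirtingerZ_eq {F : ℂ → ℂ} {z u w : ℂ} (hFz : ‖F z‖ < 1)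
    (hw : w ^ 2 = hopfCoeff F z) (hre : (w * u).re = 0)
    (hmod : ‖wirtingerZ F z‖ = ‖wirtingerZbar F z‖) : fderiv ℝ F z u = 0 := by
  rw [fderiv_apply_eq_wirtinger]
  refine add_eq_zero_of_norm_eq_of_mul_conj_nonpos ?_
    (wirtingerZ_mul_conj_wirtingerZbar_nonpos hFz hw hre)
  rw [norm_mul, norm_mul, hmod, norm_conj]

/-- Let `F : U → ℍ²` (disk model) be a harmonic map with Hopf differential `φ dz²`,
`φ = σ(F)² F_z conj(F)_z`, on `U = {|z| > 1}`.  If `|F_z| = |F_z̄|` along a smooth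
curve `c(t)` satisfying `Re W(c(t)) ≡ const`, where `W' = √φ` (equivalently
`Re (√φ(c(t)) · c'(t)) = 0` for all `t`), then `F ∘ c` is constant. -/
theorem harmonic_image_constant_on_level_curve
    (F : ℂ → ℂ) (hF : ContDiff ℝ 1 F)
    (hFD : ∀ z : ℂ, 1 < ‖z‖ → ‖F z‖ < 1)
    (sqphi : ℂ → ℂ) (hsq : ∀ z : ℂ, sqphi z ^ 2 = hopfCoeff F z)
    (c : ℝ → ℂ) (hc : ContDiff ℝ 1 c)
    (hU : ∀ t : ℝ, 1 < ‖c t‖)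
    (hRe : ∀ t : ℝ, (sqphi (c t) * deriv c t).re = 0)
    (hmod : ∀ t : ℝ, ‖wirtingerZ F (c t)‖ = ‖wirtingerZbar F (c t)‖) :
    ∀ t₁ t₂ : ℝ, F (c t₁) = F (c t₂) := by
  have hFd : Differentiable ℝ F := hF.differentiable one_ne_zero
  have hcd : Differentiable ℝ c := hc.differentiable one_ne_zero
  refine is_const_of_deriv_eq_zero (hFd.comp hcd) fun t => ?_
  exact (fderiv_comp_deriv t (hFd (c t)) (hcd t)).trans
    (fderiv_apply_eq_zero_of_norm_wirtingerZ_eq (hFD _ (hU t)) (hsq _) (hRe t) (hmod t))
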